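/- arXiv:1701.01781 — 2 statements merged into one kernel-verified Lean document; each statement's English description precedes it below -/
import Mathlib

section
/- Let N ⊂ k[x₁,x₂] be a finite order ideal of monomials and for each e ≥ 0 let λₑ = |{a : x₁ᵃx₂ᵉ ∈ N}|. Then the monomial ideal I with escalier N is stable if and only if the sequence (λ₀, λ₁, ..., λ_{h-1}) of nonzero values is strictly decreasing, i.e., λ₀ > λ₁ > ... > λ_{h-1} > 0. -/
def IsStable {n : ℕ} (I : Set (Fin n → ℕ)) : Prop :=
  ∀ τ ∈ I, ∀ m j : Fin n, τ m ≠ 0 → (∀ l, l < m → τ l = 0) → m < j →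
    τ - Pi.single m 1 + Pi.single j 1 ∈ I

def mon2 (a e : ℕ) : Fin 2 → ℕ := ![a, e]

/-!
In two variables the only move in the definition of stability is `x₁ → x₂`, so the complement
of `N` is stable exactly when `x₁ᵃx₂ᵉ⁺¹ ∈ N` forces `x₁ᵃ⁺¹x₂ᵉ ∈ N`. Each row
`{a | x₁ᵃx₂ᵉ ∈ N}` is a finite initial segment `[0, λₑ)`, so this condition reads
`a < λₑ₊₁ → a + 1 < λₑ`, i.e. `λₑ₊₁ < λₑ` whenever `λₑ₊₁ > 0`.
-/

lemma IsLowerSet.eq_Iio_natCard {s : Set ℕ} (hl : IsLowerSet s) (hs : s.Finite) :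
    s = Set.Iio (Nat.card s) := by
  obtain rfl | ⟨n, rfl⟩ := hl.eq_univ_or_Iio
  · exact absurd hs Set.infinite_univ
  · rw [Nat.card_coe_set_eq, Set.ncard_Iio_nat]

lemma forall_lt_succ_iff (r : ℕ → ℕ) :
    (∀ a e, a < r (e + 1) → a + 1 < r e) ↔ ∀ e, 0 < r (e + 1) → r (e + 1) < r e := by
  constructor
  · intro h e hpos
    have := h (r (e + 1) - 1) e (by omega)
    omega
  · intro h a e ha
    have := h e (by omega)
    omega

@[simp]
lemma mon2_le_mon2 {a b e f : ℕ} : mon2 a e ≤ mon2 b f ↔ a ≤ b ∧ e ≤ f := by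
  simp [mon2, Pi.le_def, Fin.forall_fin_two]

lemma eq_mon2 (τ : Fin 2 → ℕ) : τ = mon2 (τ 0) (τ 1) := by
  ext i; fin_cases i <;> rfl

lemma mon2_succ_sub_single_add_single (a e : ℕ) :
    mon2 (a + 1) e - Pi.single 0 1 + Pi.single 1 1 = mon2 a (e + 1) := by
  ext i; fin_cases i <;> simp [mon2, Matrix.vecHead, Matrix.vecTail]

lemma isStable_iff_forall_mon2 {I : Set (Fin 2 → ℕ)} :
    IsStable I ↔ ∀ a e, mon2 (a + 1) e ∈ I → mon2 a (e + 1) ∈ I := by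
  constructor
  · intro h a e hI
    rw [← mon2_succ_sub_single_add_single]
    exact h _ hI 0 1 (by simp [mon2]) (fun l hl => absurd hl (Fin.not_lt_zero l)) Fin.zero_lt_one
  · intro h τ hτ m j hm _ hmj
    obtain ⟨rfl, rfl⟩ : m = 0 ∧ j = 1 := by omega
    obtain ⟨a, ha⟩ := Nat.exists_eq_succ_of_ne_zero hm
    rw [eq_mon2 τ, ha] at hτ ⊢
    rw [mon2_succ_sub_single_add_single]
    exact h a _ hτ

lemma mem_iff_lt_natCard_row {N : Set (Fin 2 → ℕ)} (hN : IsLowerSet N) (hfin : N.Finite)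
    (a e : ℕ) : mon2 a e ∈ N ↔ a < Nat.card {a | mon2 a e ∈ N} := by
  have hrow : IsLowerSet {a | mon2 a e ∈ N} := fun _ _ hba ha => hN (by simpa using hba) ha
  have hfin_row : {a | mon2 a e ∈ N}.Finite :=
    hfin.preimage fun _ _ _ _ h => by simpa [mon2] using congr_fun h 0
  exact Set.ext_iff.mp (hrow.eq_Iio_natCard hfin_row) a

theorem stable_iff_strictly_decreasing_rows (N : Set (Fin 2 → ℕ))
    (hfin : N.Finite)
    (hord : ∀ τ ∈ N, ∀ σ : Fin 2 → ℕ, σ ≤ τ → σ ∈ N) :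
    IsStable {τ : Fin 2 → ℕ | τ ∉ N} ↔
      ∀ e : ℕ, 0 < Nat.card {a : ℕ | mon2 a (e + 1) ∈ N} →
        Nat.card {a : ℕ | mon2 a (e + 1) ∈ N} < Nat.card {a : ℕ | mon2 a e ∈ N} := by
  have hN : IsLowerSet N := fun τ σ hστ hτ => hord τ hτ σ hστ
  refine isStable_iff_forall_mon2.trans (Iff.trans (forall₂_congr fun a e => ?_)
    (forall_lt_succ_iff fun e => Nat.card {a | mon2 a e ∈ N}))
  rw [Set.mem_ofPred_eq, Set.mem_ofPred_eq, not_imp_not, mem_iff_lt_natCard_row hN hfin,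
    mem_iff_lt_natCard_row hN hfin]
end

section
/- Conversely, given a finite array (ρ_{i,j}) of nonnegative integers, 1 ≤ i ≤ k, 1 ≤ j, with positive entries forming a left-justified shape β₁ > β₂ > ... > β_k > 0 (row i has exactly βᵢ positive entries), strictly decreasing along rows (ρ_{i,j} > ρ_{i,j+1} for j < βᵢ) and strictly decreasing down columns (ρ_{i,j} > ρ_{i+1,j} for j ≤ β_{i+1}), the set N = { x₁ᵃx₂^{j-1}x₃^{i-1} : 1 ≤ i ≤ k, 1 ≤ j ≤ βᵢ, 0 ≤ a < ρ_{i,j} } is an order ideal, and the monomial ideal J of monomials outside N is stable. -/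
def mon3 (a b c : ℕ) : Fin 3 → ℕ := ![a, b, c]

/-- `P i j` is the entry in row `i` and column `j` (0-based), and entries off the shape are `0`. -/
structure IsStrictPlanePartition (P : ℕ → ℕ → ℕ) : Prop where
  succ_right_lt : ∀ i j, 0 < P i (j + 1) → P i (j + 1) < P i j
  succ_left_lt : ∀ i j, 0 < P (i + 1) j → P (i + 1) j < P i j
  pos_succ_right_of_pos_succ_left : ∀ i j, 0 < P (i + 1) j → 0 < P i (j + 1)

/-- The monomials `x₁ᵃ x₂ʲ x₃ⁱ` with `a < P i j`, encoded as exponent vectors `(a, j, i)`. -/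
def planeDiagram (P : ℕ → ℕ → ℕ) : Set (Fin 3 → ℕ) :=
  {τ | τ 0 < P (τ 2) (τ 1)}

namespace IsStrictPlanePartition

variable {P : ℕ → ℕ → ℕ} (hP : IsStrictPlanePartition P)
include hP

theorem antitone_right (i : ℕ) : Antitone (P i) :=
  antitone_nat_of_succ_le fun j =>
    (Nat.eq_zero_or_pos (P i (j + 1))).elim (fun h => h ▸ Nat.zero_le _)
      fun h => (hP.succ_right_lt i j h).le

theorem antitone_left (j : ℕ) : Antitone (P · j) :=
  antitone_nat_of_succ_le fun i =>
    (Nat.eq_zero_or_pos (P (i + 1) j)).elim (fun h => h ▸ Nat.zero_le _)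
      fun h => (hP.succ_left_lt i j h).le

theorem apply_le_apply {i i' j j' : ℕ} (hi : i ≤ i') (hj : j ≤ j') : P i' j' ≤ P i j :=
  (hP.antitone_left j' hi).trans (hP.antitone_right i hj)

theorem isLowerSet_planeDiagram : IsLowerSet (planeDiagram P) := fun τ σ hστ (hτ : τ 0 < _) =>
  show σ 0 < P (σ 2) (σ 1) from
    (hστ 0).trans_lt (hτ.trans_le (hP.apply_le_apply (hστ 2) (hστ 1)))

theorem isStable_compl_planeDiagram : IsStable (planeDiagram P)ᶜ := by
  intro τ hτ m j hm hmin hmj hσ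
  refine hτ ?_
  simp only [planeDiagram, Set.mem_ofPred_eq] at hσ ⊢
  fin_cases m <;> fin_cases j <;> try exact absurd hmj (by decide)
  all_goals simp only [Fin.zero_eta, Fin.mk_one, Fin.reduceFinMk, Pi.add_apply, Pi.sub_apply,
    Pi.single_apply, Fin.reduceEq, ↓reduceIte, add_zero, tsub_zero] at hm hσ
  · -- `x₁ → x₂`
    have := hP.succ_right_lt (τ 2) (τ 1) (by omega)
    omega
  · -- `x₁ → x₃`
    have := hP.succ_left_lt (τ 2) (τ 1) (by omega)
    omega
  · -- `x₂ → x₃`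
    have h0 : τ 0 = 0 := hmin 0 (by decide)
    have := hP.pos_succ_right_of_pos_succ_left (τ 2) (τ 1 - 1) (by omega)
    rw [Nat.sub_add_cancel (Nat.pos_of_ne_zero hm)] at this
    omega

end IsStrictPlanePartition

def extendByZero {k : ℕ} (β : Fin k → ℕ) (ρ : Fin k → ℕ → ℕ) (i j : ℕ) : ℕ :=
  if h : i < k then if j < β ⟨i, h⟩ then ρ ⟨i, h⟩ j else 0 else 0

section ExtendByZero

variable {k : ℕ} {β : Fin k → ℕ} {ρ : Fin k → ℕ → ℕ}

theorem extendByZero_of_lt {i : Fin k} {j : ℕ} (hj : j < β i) : extendByZero β ρ i j = ρ i j := by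
  simp [extendByZero, hj]

theorem pos_extendByZero {i j : ℕ} (h : 0 < extendByZero β ρ i j) :
    ∃ hi : i < k, j < β ⟨i, hi⟩ := by
  unfold extendByZero at h
  split_ifs at h with hi hj
  · exact ⟨hi, hj⟩
  all_goals omega

theorem isStrictPlanePartition_extendByZero (hβ : StrictAnti β)
    (hpos : ∀ i, ∀ j, j < β i → 0 < ρ i j)
    (hrow : ∀ i, ∀ j, j + 1 < β i → ρ i (j + 1) < ρ i j)
    (hcol : ∀ (i : Fin k) (h : (i : ℕ) + 1 < k), ∀ j, j < β ⟨(i : ℕ) + 1, h⟩ →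
      ρ ⟨(i : ℕ) + 1, h⟩ j < ρ i j) :
    IsStrictPlanePartition (extendByZero β ρ) := by
  have succ_lt_of_lt_succ {i : ℕ} (hi : i + 1 < k) {j : ℕ} (hj : j < β ⟨i + 1, hi⟩) :
      j + 1 < β ⟨i, by omega⟩ := by
    have := hβ (show (⟨i, by omega⟩ : Fin k) < ⟨i + 1, hi⟩ from Fin.mk_lt_mk.mpr i.lt_succ_self)
    omega
  refine ⟨fun i j h => ?_, fun i j h => ?_, fun i j h => ?_⟩
  · obtain ⟨hi, hj⟩ := pos_extendByZero h
    rw [extendByZero_of_lt (i := ⟨i, hi⟩) hj, extendByZero_of_lt (i := ⟨i, hi⟩) (by omega)]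
    exact hrow _ _ hj
  · obtain ⟨hi, hj⟩ := pos_extendByZero h
    rw [extendByZero_of_lt (i := ⟨i + 1, hi⟩) hj,
      extendByZero_of_lt (i := ⟨i, by omega⟩) (by have := succ_lt_of_lt_succ hi hj; omega)]
    exact hcol ⟨i, by omega⟩ hi j hj
  · obtain ⟨hi, hj⟩ := pos_extendByZero h
    rw [extendByZero_of_lt (i := ⟨i, by omega⟩) (succ_lt_of_lt_succ hi hj)]
    exact hpos _ _ (succ_lt_of_lt_succ hi hj)

theorem planeDiagram_extendByZero (β : Fin k → ℕ) (ρ : Fin k → ℕ → ℕ) :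
    planeDiagram (extendByZero β ρ) = {τ : Fin 3 → ℕ | ∃ (i : Fin k) (j a : ℕ),
      j < β i ∧ a < ρ i j ∧ τ = mon3 a j (i : ℕ)} := by
  ext τ
  constructor
  · intro (h : τ 0 < _)
    obtain ⟨hi, hj⟩ := pos_extendByZero (Nat.zero_lt_of_lt h)
    rw [extendByZero_of_lt (i := ⟨τ 2, hi⟩) hj] at h
    exact ⟨⟨τ 2, hi⟩, τ 1, τ 0, hj, h, by ext l; fin_cases l <;> rfl⟩
  · rintro ⟨i, j, a, hj, ha, rfl⟩
    show a < extendByZero β ρ i j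
    rwa [extendByZero_of_lt hj]

end ExtendByZero

theorem strict_plane_partition_gives_stable_ideal_general
    (k : ℕ) (β : Fin k → ℕ) (hβ : StrictAnti β)
    (ρ : Fin k → ℕ → ℕ)
    (hpos : ∀ i, ∀ j, j < β i → 0 < ρ i j)
    (hrow : ∀ i, ∀ j, j + 1 < β i → ρ i (j + 1) < ρ i j)
    (hcol : ∀ (i : Fin k) (h : (i : ℕ) + 1 < k), ∀ j, j < β ⟨(i : ℕ) + 1, h⟩ →
      ρ ⟨(i : ℕ) + 1, h⟩ j < ρ i j)
    (N : Set (Fin 3 → ℕ))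
    (hN : N = {τ : Fin 3 → ℕ | ∃ (i : Fin k) (j a : ℕ),
      j < β i ∧ a < ρ i j ∧ τ = mon3 a j (i : ℕ)}) :
    (∀ τ ∈ N, ∀ σ : Fin 3 → ℕ, σ ≤ τ → σ ∈ N) ∧
    IsStable {τ : Fin 3 → ℕ | τ ∉ N} := by
  have hP := isStrictPlanePartition_extendByZero hβ hpos hrow hcol
  rw [← planeDiagram_extendByZero] at hN
  subst hN
  exact ⟨fun τ hτ σ hστ => hP.isLowerSet_planeDiagram hστ hτ, hP.isStable_compl_planeDiagram⟩

theorem strict_plane_partition_gives_stable_ideal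
    (k : ℕ) (β : Fin k → ℕ) (hβpos : ∀ i, 0 < β i) (hβ : StrictAnti β)
    (ρ : Fin k → ℕ → ℕ)
    (hpos : ∀ i, ∀ j, j < β i → 0 < ρ i j)
    (hzero : ∀ i, ∀ j, β i ≤ j → ρ i j = 0)
    (hrow : ∀ i, ∀ j, j + 1 < β i → ρ i (j + 1) < ρ i j)
    (hcol : ∀ (i : Fin k) (h : (i : ℕ) + 1 < k), ∀ j, j < β ⟨(i : ℕ) + 1, h⟩ →
      ρ ⟨(i : ℕ) + 1, h⟩ j < ρ i j)
    (N : Set (Fin 3 → ℕ))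
    (hN : N = {τ : Fin 3 → ℕ | ∃ (i : Fin k) (j a : ℕ),
      j < β i ∧ a < ρ i j ∧ τ = mon3 a j (i : ℕ)}) :
    (∀ τ ∈ N, ∀ σ : Fin 3 → ℕ, σ ≤ τ → σ ∈ N) ∧
    IsStable {τ : Fin 3 → ℕ | τ ∉ N} :=
  strict_plane_partition_gives_stable_ideal_general k β hβ ρ hpos hrow hcol N hN
end
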